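/- arXiv:0804.4194 — 3 statements merged into one kernel-verified Lean document; each statement's English description precedes it below -/
import Mathlib

section
/- For 0 ≤ r ≤ m, the minimum distance of the binary Reed–Muller code R(r, m) equals 2^{m−r}. -/
def RM (r m : ℕ) : Submodule (ZMod 2) ((Fin m → ZMod 2) → ZMod 2) where
  carrier := {f | ∃ p : MvPolynomial (Fin m) (ZMod 2),
    p.totalDegree ≤ r ∧ ∀ x, MvPolynomial.eval x p = f x}
  zero_mem' := ⟨0, by simp⟩
  add_mem' := by
    rintro f g ⟨p, hp, hpf⟩ ⟨q, hq, hqf⟩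
    exact ⟨p + q, le_trans (MvPolynomial.totalDegree_add p q) (max_le hp hq),
      by intro x; simp [hpf, hqf]⟩
  smul_mem' := by
    rintro c f ⟨p, hp, hpf⟩
    refine ⟨c • p, le_trans (MvPolynomial.totalDegree_smul_le c p) hp, ?_⟩
    intro x
    simp [MvPolynomial.smul_eval, hpf]

/-!
Split a codeword `f ∈ R(r, m+1)` along its first coordinate into `g₀ = f(0, ·)` and
`g₁ = f(1, ·)`. Both lie in `R(r, m)`, and `g₁ - g₀ ∈ R(r-1, m)`, since the difference kills the
part of `f` not involving `x₀`, and `x₀^k` takes the same values as `x₀` on `{0, 1}`. The weight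
of `f` is `wt g₀ + wt g₁ ≥ wt (g₁ - g₀)`, so by induction it is at least `2^(m+1-r)` when
`g₁ ≠ g₀`; when `g₁ = g₀ ≠ 0` it is `2 wt g₀ ≥ 2 · 2^(m-r)`. The monomial `x₀ ⋯ x_{r-1}`
has weight exactly `2^(m-r)`.
-/

open Finset

namespace MvPolynomial

variable {R : Type*} {n : ℕ}

section CommSemiring

variable [CommSemiring R]

theorem totalDegree_coeff_finSuccEquiv_le (p : MvPolynomial (Fin (n + 1)) R) (i : ℕ) :
    ((finSuccEquiv R n p).coeff i).totalDegree ≤ p.totalDegree - i := by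
  by_cases hi : (finSuccEquiv R n p).coeff i = 0
  · simp [hi]
  · have := totalDegree_coeff_finSuccEquiv_add_le p i hi
    omega

theorem totalDegree_polynomial_eval_C_le {σ : Type*} (P : Polynomial (MvPolynomial σ R)) (c : R)
    {k : ℕ} (hP : ∀ i, (P.coeff i).totalDegree ≤ k) : (P.eval (C c)).totalDegree ≤ k := by
  rw [Polynomial.eval_eq_sum_range]
  refine totalDegree_finsetSum_le fun i _ => ?_
  calc _ ≤ (P.coeff i).totalDegree + (C c ^ i).totalDegree := totalDegree_mul _ _
    _ ≤ k := by rw [← C_pow, totalDegree_C, add_zero]; exact hP i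

theorem totalDegree_polynomial_eval_C_finSuccEquiv_le (p : MvPolynomial (Fin (n + 1)) R)
    (c : R) : ((finSuccEquiv R n p).eval (C c)).totalDegree ≤ p.totalDegree :=
  totalDegree_polynomial_eval_C_le _ c fun i =>
    (totalDegree_coeff_finSuccEquiv_le p i).trans (Nat.sub_le _ _)

theorem totalDegree_divX_eval_one_finSuccEquiv_le (p : MvPolynomial (Fin (n + 1)) R) :
    ((finSuccEquiv R n p).divX.eval 1).totalDegree ≤ p.totalDegree - 1 := by
  rw [← C_1]
  refine totalDegree_polynomial_eval_C_le _ 1 fun i => ?_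
  rw [Polynomial.coeff_divX]
  exact (totalDegree_coeff_finSuccEquiv_le p (i + 1)).trans (by omega)

theorem eval_cons_eq_eval_polynomial_eval (p : MvPolynomial (Fin (n + 1)) R) (c : R)
    (y : Fin n → R) :
    eval (Fin.cons c y) p = eval y ((finSuccEquiv R n p).eval (C c)) := by
  rw [eval_polynomial_eval_finSuccEquiv, eval_C]
  rfl

end CommSemiring

theorem eval_cons_one_sub_eval_cons_zero [CommRing R] (p : MvPolynomial (Fin (n + 1)) R)
    (y : Fin n → R) :
    eval (Fin.cons 1 y) p - eval (Fin.cons 0 y) p =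
      eval y ((finSuccEquiv R n p).divX.eval 1) := by
  set Q := finSuccEquiv R n p
  have hQ : Q.eval 1 = Q.divX.eval 1 + Q.eval 0 := by
    conv_lhs => rw [← Polynomial.divX_mul_X_add Q]
    simp [Polynomial.coeff_zero_eq_eval_zero]
  rw [eval_cons_eq_eval_polynomial_eval, eval_cons_eq_eval_polynomial_eval, C_0, C_1, hQ,
    map_add, add_sub_cancel_right]

end MvPolynomial

namespace RM

open MvPolynomial

variable {r m : ℕ}

theorem comp_cons_mem {f : (Fin (m + 1) → ZMod 2) → ZMod 2} (hf : f ∈ RM r (m + 1))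
    (c : ZMod 2) : (fun y => f (Fin.cons c y)) ∈ RM r m := by
  obtain ⟨p, hp, hpf⟩ := hf
  exact ⟨_, (totalDegree_polynomial_eval_C_finSuccEquiv_le p c).trans hp,
    fun y => by simp only [← hpf, eval_cons_eq_eval_polynomial_eval]⟩

theorem comp_cons_one_sub_comp_cons_zero_mem {f : (Fin (m + 1) → ZMod 2) → ZMod 2}
    (hf : f ∈ RM (r + 1) (m + 1)) :
    (fun y => f (Fin.cons 1 y) - f (Fin.cons 0 y)) ∈ RM r m := by
  obtain ⟨p, hp, hpf⟩ := hf
  exact ⟨_, (totalDegree_divX_eval_one_finSuccEquiv_le p).trans (by omega),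
    fun y => by simp only [← hpf, eval_cons_one_sub_eval_cons_zero]⟩

theorem exists_eq_const_of_mem_zero {f : (Fin m → ZMod 2) → ZMod 2} (hf : f ∈ RM 0 m) :
    ∃ c, f = fun _ => c := by
  obtain ⟨p, hp, hpf⟩ := hf
  obtain ⟨c, rfl⟩ : ∃ c, p = C c := ⟨_, totalDegree_eq_zero_iff_eq_C.mp (Nat.le_zero.mp hp)⟩
  exact ⟨c, funext fun x => by rw [← hpf, eval_C]⟩

theorem prod_mem {s : Finset (Fin m)} (hs : #s ≤ r) :
    (fun x : Fin m → ZMod 2 => ∏ i ∈ s, x i) ∈ RM r m := by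
  refine ⟨∏ i ∈ s, X i, (totalDegree_finsetProd _ _).trans ?_, fun x => by simp⟩
  simpa [totalDegree_X] using hs

end RM

section Hamming

variable {β : Type*} [DecidableEq β] [Zero β]

theorem hammingNorm_const {ι : Type*} [Fintype ι] {c : β} (hc : c ≠ 0) :
    hammingNorm (fun _ : ι => c) = Fintype.card ι := by
  simp [hammingNorm, hc]

theorem hammingNorm_eq_sum_hammingNorm_comp_cons {α : Type*} [Fintype α] {n : ℕ}
    (f : (Fin (n + 1) → α) → β) :
    hammingNorm f = ∑ c, hammingNorm fun y => f (Fin.cons c y) := by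
  simp only [hammingNorm, card_filter]
  rw [← (Fin.consEquiv fun _ => α).sum_comp, Fintype.sum_prod_type]
  rfl

theorem hammingNorm_sub_le {ι G : Type*} [Fintype ι] [AddCommGroup G] [DecidableEq G]
    (x y : ι → G) : hammingNorm (x - y) ≤ hammingNorm x + hammingNorm y :=
  calc hammingNorm (x - y) = hammingDist y x := by
        rw [hammingDist_eq_hammingNorm, neg_add_eq_sub]
    _ ≤ hammingDist y 0 + hammingDist 0 x := hammingDist_triangle _ _ _
    _ = hammingNorm x + hammingNorm y := by simp [add_comm]

theorem hammingNorm_prod_apply {ι : Type*} [Fintype ι] [DecidableEq ι] (s : Finset ι) :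
    hammingNorm (fun x : ι → ZMod 2 => ∏ i ∈ s, x i) = 2 ^ (Fintype.card ι - #s) := by
  have hne : ∀ a : ZMod 2, a ≠ 0 ↔ a = 1 := by decide
  have hsupp : ({x | ∏ i ∈ s, x i ≠ 0} : Finset (ι → ZMod 2)) =
      Fintype.piFinset fun i => if i ∈ s then {1} else univ := by
    ext x
    simp only [mem_filter, mem_univ, true_and, Fintype.mem_piFinset]
    rw [prod_ne_zero_iff]
    simp only [hne]
    refine forall_congr' fun i => ?_
    split_ifs with hi <;> simp [hi]
  rw [hammingNorm, hsupp, Fintype.card_piFinset]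
  simp only [apply_ite card, card_singleton, card_univ, ZMod.card]
  rw [prod_ite]
  simp [filter_not, card_univ_sdiff]

end Hamming

theorem RM.two_pow_sub_le_hammingNorm {r m : ℕ} {f : (Fin m → ZMod 2) → ZMod 2}
    (hf : f ∈ RM r m) (hf0 : f ≠ 0) : 2 ^ (m - r) ≤ hammingNorm f := by
  induction m generalizing r with
  | zero =>
    rw [Nat.zero_sub, pow_zero]
    exact hammingNorm_pos_iff.mpr hf0
  | succ m ih =>
    set g : ZMod 2 → (Fin m → ZMod 2) → ZMod 2 := fun c y => f (Fin.cons c y)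
    have hsplit : hammingNorm f = hammingNorm (g 0) + hammingNorm (g 1) :=
      (hammingNorm_eq_sum_hammingNorm_comp_cons f).trans (Fin.sum_univ_two _)
    cases r with
    | zero =>
      obtain ⟨c, rfl⟩ := RM.exists_eq_const_of_mem_zero hf
      have hc : c ≠ 0 := by rintro rfl; exact hf0 rfl
      simp [hammingNorm_const hc]
    | succ r =>
      by_cases hd : g 1 - g 0 = 0
      · have hg : g 1 = g 0 := sub_eq_zero.mp hd
        have hg0 : g 0 ≠ 0 := by
          intro h0
          apply hf0
          rw [← hammingNorm_eq_zero, hsplit, hg, h0, hammingNorm_zero]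
        have hle : 2 ^ (m - (r + 1)) ≤ hammingNorm (g 0) := ih (RM.comp_cons_mem hf 0) hg0
        calc 2 ^ (m + 1 - (r + 1)) ≤ 2 ^ (m - (r + 1) + 1) :=
              Nat.pow_le_pow_right two_pos (by omega)
          _ ≤ hammingNorm f := by rw [hsplit, hg, pow_succ]; omega
      · calc 2 ^ (m + 1 - (r + 1)) = 2 ^ (m - r) := by rw [Nat.add_sub_add_right]
          _ ≤ hammingNorm (g 1 - g 0) := ih (RM.comp_cons_one_sub_comp_cons_zero_mem hf) hd
          _ ≤ hammingNorm f := by rw [hsplit, add_comm]; exact hammingNorm_sub_le _ _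

theorem RM_minDist_general (r m : ℕ) :
    (∀ f ∈ RM r m, f ≠ 0 → 2 ^ (m - r) ≤ hammingNorm f) ∧
    ∃ f ∈ RM r m, f ≠ 0 ∧ hammingNorm f = 2 ^ (m - r) := by
  refine ⟨fun f hf hf0 => RM.two_pow_sub_le_hammingNorm hf hf0, ?_⟩
  set s : Finset (Fin m) := {i | (i : ℕ) < r}
  have hs : #s = min m r := Fin.card_filter_val_lt
  have hweight : hammingNorm (fun x : Fin m → ZMod 2 => ∏ i ∈ s, x i) = 2 ^ (m - r) := by
    rw [hammingNorm_prod_apply, Fintype.card_fin, hs]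
    congr 1
    omega
  refine ⟨_, RM.prod_mem (hs ▸ min_le_right m r), ?_, hweight⟩
  rw [← hammingNorm_pos_iff, hweight]
  positivity

/-- The minimum distance of the binary Reed–Muller code `R(r,m)` equals `2^(m-r)`. -/
theorem RM_minDist (r m : ℕ) (h : r ≤ m) :
    (∀ f ∈ RM r m, f ≠ 0 → 2 ^ (m - r) ≤ hammingNorm f) ∧
    ∃ f ∈ RM r m, f ≠ 0 ∧ hammingNorm f = 2 ^ (m - r) :=
  RM_minDist_general r m
end

section
/- For 0 ≤ r ≤ m−1, the dual code of the binary Reed–Muller code R(r, m) with respect to the standard bilinear form on F_2^{2^m} is R(m−r−1, m). -/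
def dualCode {R ι : Type*} [CommRing R] [Fintype ι] (C : Submodule R (ι → R)) :
    Submodule R (ι → R) where
  carrier := {y | ∀ x ∈ C, ∑ i, x i * y i = 0}
  zero_mem' := by intro x hx; simp
  add_mem' := by
    intro a b ha hb x hx
    simp only [Set.mem_setOf_eq] at ha hb
    simp [Pi.add_apply, mul_add, Finset.sum_add_distrib, ha x hx, hb x hx]
  smul_mem' := by
    intro c a ha x hx
    simp only [Set.mem_setOf_eq] at ha
    simp only [Pi.smul_apply, smul_eq_mul, mul_left_comm, ← Finset.mul_sum, ha x hx, mul_zero]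

/-!
One inclusion is orthogonality: if `deg p ≤ r` and `deg q ≤ m - r - 1` then `p * q` has degree
`< m`, so each of its monomials misses some variable and sums to zero over `𝔽₂^m`
(Chevalley–Warning). For the other, expand `y` in its algebraic normal form
`y = ∑_S c_S ∏_{i ∈ S} x_i`; Möbius inversion gives `c_S = ∑_a y(a) ∏_{i ∉ S} (a_i + 1)`, which is
the inner product of `y` with a codeword of `R(|Sᶜ|, m)`, hence vanishes when `|S| > m - r - 1`.
-/

open MvPolynomial Finset

lemma ZMod.two_add_add_one (u v : ZMod 2) : u + v + 1 = if u = v then 1 else 0 := by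
  revert u v; decide

section AlgebraicNormalForm

variable {σ : Type*} [Fintype σ] [DecidableEq σ]

def anfCoeff (f : (σ → ZMod 2) → ZMod 2) (S : Finset σ) : ZMod 2 :=
  ∑ a, f a * ∏ i ∈ Sᶜ, (a i + 1)

lemma sum_prod_compl_add_one_mul_prod (a x : σ → ZMod 2) :
    ∑ S : Finset σ, (∏ i ∈ Sᶜ, (a i + 1)) * ∏ i ∈ S, x i = if a = x then 1 else 0 := by
  calc _ = ∏ i, (x i + (a i + 1)) := by
        rw [Fintype.prod_add]
        exact sum_congr rfl fun S _ => mul_comm _ _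
    _ = ∏ i, if x i = a i then 1 else 0 := by simp only [← add_assoc, ZMod.two_add_add_one]
    _ = if a = x then 1 else 0 := by
        rw [Fintype.prod_boole]
        exact if_congr ⟨fun h => funext fun i => (h i).symm, fun h i => (congrFun h i).symm⟩
          rfl rfl

lemma sum_anfCoeff_mul_prod (f : (σ → ZMod 2) → ZMod 2) (x : σ → ZMod 2) :
    ∑ S, anfCoeff f S * ∏ i ∈ S, x i = f x := by
  simp only [anfCoeff, sum_mul, mul_assoc]
  rw [sum_comm]
  simp only [← mul_sum, sum_prod_compl_add_one_mul_prod, mul_ite, mul_one, mul_zero,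
    Finset.sum_ite_eq', mem_univ, if_true]

end AlgebraicNormalForm

lemma prod_add_one_mem_RM {r m : ℕ} {T : Finset (Fin m)} (hT : T.card ≤ r) :
    (fun a : Fin m → ZMod 2 => ∏ i ∈ T, (a i + 1)) ∈ RM r m := by
  refine ⟨∏ i ∈ T, (X i + 1), ?_, fun x => by simp⟩
  calc (∏ i ∈ T, (X i + 1 : MvPolynomial (Fin m) (ZMod 2))).totalDegree
      ≤ ∑ i ∈ T, (X i + 1 : MvPolynomial (Fin m) (ZMod 2)).totalDegree :=
        totalDegree_finsetProd _ _
    _ ≤ ∑ _i ∈ T, 1 := sum_le_sum fun i _ =>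
        (totalDegree_add _ _).trans (by simp [totalDegree_X, totalDegree_one])
    _ ≤ r := by simpa using hT

lemma mem_RM_of_eq_sum_mul_prod {r m : ℕ} {f : (Fin m → ZMod 2) → ZMod 2}
    (c : Finset (Fin m) → ZMod 2) (hf : ∀ x, f x = ∑ S, c S * ∏ i ∈ S, x i)
    (hc : ∀ S, r < S.card → c S = 0) : f ∈ RM r m := by
  refine ⟨∑ S, C (c S) * ∏ i ∈ S, X i, totalDegree_finsetSum_le fun S _ => ?_, fun x => ?_⟩
  · by_cases hS : r < S.card
    · rw [hc S hS, map_zero, zero_mul, totalDegree_zero]; exact Nat.zero_le _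
    calc (C (c S) * ∏ i ∈ S, X i : MvPolynomial (Fin m) (ZMod 2)).totalDegree
        ≤ (C (c S) : MvPolynomial (Fin m) (ZMod 2)).totalDegree
            + ∑ i ∈ S, (X i : MvPolynomial (Fin m) (ZMod 2)).totalDegree :=
          (totalDegree_mul _ _).trans (add_le_add le_rfl (totalDegree_finsetProd _ _))
      _ ≤ r := by
        simp only [totalDegree_C, totalDegree_X, sum_const, smul_eq_mul, mul_one]
        omega
  · simp only [hf, map_sum, map_mul, eval_C, map_prod, eval_X]

lemma sum_mul_eq_zero_of_mem_RM {r s m : ℕ} {f g : (Fin m → ZMod 2) → ZMod 2}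
    (hf : f ∈ RM r m) (hg : g ∈ RM s m) (hrs : r + s < m) : ∑ x, f x * g x = 0 := by
  obtain ⟨p, hp, hpf⟩ := hf
  obtain ⟨q, hq, hqg⟩ := hg
  have hdeg : (p * q).totalDegree < (Fintype.card (ZMod 2) - 1) * Fintype.card (Fin m) := by
    simpa using (totalDegree_mul p q).trans_lt (by omega)
  simpa [← hpf, ← hqg] using sum_eval_eq_zero (p * q) hdeg

lemma anfCoeff_eq_zero_of_mem_dualCode {r m : ℕ} {y : (Fin m → ZMod 2) → ZMod 2}
    (hy : y ∈ dualCode (RM r m)) {S : Finset (Fin m)} (hS : m ≤ S.card + r) :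
    anfCoeff y S = 0 := by
  have hSc : Sᶜ.card ≤ r := by rw [card_compl, Fintype.card_fin]; omega
  rw [anfCoeff, ← hy _ (prod_add_one_mem_RM hSc)]
  exact sum_congr rfl fun a _ => mul_comm _ _

/-- The dual of the Reed–Muller code `R(r,m)` is `R(m-r-1,m)`, for `0 ≤ r ≤ m-1`. -/
theorem RM_dual (r m : ℕ) (h : r + 1 ≤ m) :
    dualCode (RM r m) = RM (m - r - 1) m := by
  ext y
  constructor
  · intro hy
    exact mem_RM_of_eq_sum_mul_prod (anfCoeff y) (fun x => (sum_anfCoeff_mul_prod y x).symm)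
      fun S hS => anfCoeff_eq_zero_of_mem_dualCode hy (by omega)
  · intro hy f hf
    exact sum_mul_eq_zero_of_mem_RM hf hy (by omega)
end

section
/- For q of characteristic 2 and any k ≥ 1, there exists a self-dual basis of F_{q^k} over F_q, i.e., an F_q-basis {e_1,...,e_k} such that Tr_{F_{q^k}/F_q}(e_i e_j) = δ_{ij} for all i, j. -/
/-!
Over a field of characteristic 2 in which every element is a square, a nondegenerate symmetric
bilinear form that is not alternating has an orthonormal basis: split off unit vectors `v`
(`B v v = 1`, obtained by rescaling any non-isotropic vector) one at a time. The only
obstruction is that the form on `v^⊥` may be alternating; then `v^⊥` contains a hyperbolic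
pair `u, w`, and in characteristic 2 the unit vector `v + u` has the unit vector `v + w` in its
orthogonal complement, so `v + u` splits off instead.

The trace form of `F_{q^k}/F_q` is nondegenerate and symmetric, and it is not alternating
because `Tr (s * s)` runs over all values of the nonzero trace map as `s` runs over `F_{q^k}`.
-/

open Module

namespace LinearMap.BilinForm

variable {K V : Type*} [Field K] [AddCommGroup V] [Module K V] {B : LinearMap.BilinForm K V}

def IsOrthonormal {ι : Type*} [DecidableEq ι] (B : LinearMap.BilinForm K V) (v : ι → V) :
    Prop :=
  ∀ i j, B (v i) (v j) = if i = j then 1 else 0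

theorem IsOrthonormal.linearIndependent {ι : Type*} [DecidableEq ι] {v : ι → V}
    (hv : B.IsOrthonormal v) : LinearIndependent K v :=
  linearIndependent_of_iIsOrtho (B := B) (fun i j hij => (hv i j).trans (if_neg hij))
    (fun i => by simp [hv i i])

theorem IsOrthonormal.cons (hB : B.IsSymm) {v : V} (hv : B v v = 1) {n : ℕ}
    {f : Fin n → B.orthogonal (K ∙ v)} (hf : (B.restrict _).IsOrthonormal f) :
    B.IsOrthonormal (Fin.cons v fun i => (f i : V) : Fin (n + 1) → V) := by
  have hvf (i : Fin n) : B v (f i) = 0 := (f i).prop v (Submodule.mem_span_singleton_self v)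
  intro i j
  cases i using Fin.cases <;> cases j using Fin.cases
  · simp [hv]
  · simp [hvf, (Fin.succ_ne_zero _).symm]
  · simp [hvf, hB.eq _ v, Fin.succ_ne_zero]
  · simpa using hf _ _

theorem exists_self_apply_eq_one (hsq : ∀ c : K, IsSquare c) {x : V} (hx : B x x ≠ 0) :
    ∃ v, B v v = 1 := by
  obtain ⟨d, hd⟩ := hsq (B x x)
  have hd0 : d ≠ 0 := by rintro rfl; simp_all
  exact ⟨d⁻¹ • x, by simp [hd, hd0]⟩

theorem exists_apply_eq_one [Nontrivial V] (hB : B.Nondegenerate) : ∃ u w, B u w = 1 := by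
  obtain ⟨u, hu⟩ := exists_ne (0 : V)
  obtain ⟨w, hw⟩ : ∃ w, B u w ≠ 0 := by
    by_contra! h
    exact hu (hB.1 u h)
  exact ⟨u, (B u w)⁻¹ • w, by simp [hw]⟩

theorem orthonormal_pair_of_hyperbolic_pair [CharP K 2] (hB : B.IsSymm) {v u w : V} (hv : B v v = 1)
    (hu : B v u = 0) (hw : B v w = 0) (huu : B u u = 0) (hww : B w w = 0) (huw : B u w = 1) :
    B (v + u) (v + u) = 1 ∧ B (v + u) (v + w) = 0 ∧ B (v + w) (v + w) = 1 := by
  simp only [map_add, LinearMap.add_apply, hv, hu, hw, huu, hww, huw, hB.eq u v, hB.eq w v]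
  exact ⟨by ring, by simpa using CharTwo.add_self_eq_zero (1 : K), by ring⟩

theorem exists_self_apply_eq_one_orthogonal [CharP K 2] (hsq : ∀ c : K, IsSquare c)
    (hB : B.IsSymm) (hnd : B.Nondegenerate) (halt : ¬B.IsAlt) :
    ∃ v, B v v = 1 ∧ (Subsingleton (B.orthogonal (K ∙ v)) ∨
      ¬(B.restrict (B.orthogonal (K ∙ v))).IsAlt) := by
  obtain ⟨x, hx⟩ := not_forall.mp halt
  obtain ⟨v, hv⟩ := exists_self_apply_eq_one hsq hx
  rcases subsingleton_or_nontrivial (B.orthogonal (K ∙ v)) with hW | _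
  · exact ⟨v, hv, Or.inl hW⟩
  by_cases hWalt : ¬(B.restrict (B.orthogonal (K ∙ v))).IsAlt
  · exact ⟨v, hv, Or.inr hWalt⟩
  rw [not_not] at hWalt
  have hvv : B v v ≠ 0 := by simp [hv]
  obtain ⟨u, w, huw⟩ :=
    exists_apply_eq_one (B.restrict_nondegenerate_orthogonal_spanSingleton hnd hB.isRefl hvv)
  have hvW (z : B.orthogonal (K ∙ v)) : B v z = 0 :=
    z.prop v (Submodule.mem_span_singleton_self v)
  obtain ⟨hvu, hvuw, hvw⟩ :=
    orthonormal_pair_of_hyperbolic_pair hB hv (hvW u) (hvW w) (hWalt u) (hWalt w) huw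
  have hmem : v + w ∈ B.orthogonal (K ∙ (v + u)) := fun z hz => by
    obtain ⟨c, rfl⟩ := Submodule.mem_span_singleton.mp hz
    rw [map_smul, LinearMap.smul_apply, hvuw, smul_zero]
  exact ⟨v + u, hvu, Or.inr fun h => one_ne_zero (hvw.symm.trans (h ⟨v + w, hmem⟩))⟩

theorem exists_isOrthonormal_fin [FiniteDimensional K V] [CharP K 2]
    (hsq : ∀ c : K, IsSquare c) (hB : B.IsSymm) (hnd : B.Nondegenerate)
    (halt : Subsingleton V ∨ ¬B.IsAlt) {n : ℕ} (hn : finrank K V = n) :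
    ∃ v : Fin n → V, B.IsOrthonormal v := by
  induction n generalizing V with
  | zero => exact ⟨Fin.elim0, fun i => i.elim0⟩
  | succ n ih =>
    have : Nontrivial V := nontrivial_of_finrank_eq_succ hn
    obtain ⟨v, hv, hW⟩ := exists_self_apply_eq_one_orthogonal hsq hB hnd
      (halt.resolve_left (not_subsingleton V))
    have hvv : B v v ≠ 0 := by simp [hv]
    have hWn : finrank K (B.orthogonal (K ∙ v)) = n := by
      have := Submodule.finrank_add_eq_of_isCompl (isCompl_span_singleton_orthogonal hvv)
      rw [finrank_span_singleton (ne_zero_of_map hvv)] at this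
      omega
    obtain ⟨f, hf⟩ := ih (B := B.restrict _) (hB.restrict _)
      (B.restrict_nondegenerate_orthogonal_spanSingleton hnd hB.isRefl hvv) hW hWn
    exact ⟨_, hf.cons hB hv⟩

theorem exists_isOrthonormal_basis [FiniteDimensional K V] [CharP K 2]
    (hsq : ∀ c : K, IsSquare c) (hB : B.IsSymm) (hnd : B.Nondegenerate) (halt : ¬B.IsAlt) :
    ∃ b : Basis (Fin (finrank K V)) K V, B.IsOrthonormal b := by
  obtain ⟨v, hv⟩ := exists_isOrthonormal_fin hsq hB hnd (Or.inr halt) rfl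
  exact ⟨basisOfLinearIndependentOfCardEqFinrank' v hv.linearIndependent (Fintype.card_fin _),
    by simpa using hv⟩

end LinearMap.BilinForm

theorem Algebra.not_isAlt_traceForm {F K : Type*} [Field F] [Field K] [Algebra F K]
    [FiniteDimensional F K] [Algebra.IsSeparable F K] (hsq : ∀ x : K, IsSquare x) :
    ¬(Algebra.traceForm F K).IsAlt := by
  intro h
  apply Algebra.trace_ne_zero F K
  ext x
  obtain ⟨s, rfl⟩ := hsq x
  exact h s

theorem exists_self_dual_basis_general
    {F K : Type*} [Field F] [Fintype F] [CharP F 2] [Field K] [Fintype K] [Algebra F K]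
    {k : ℕ} (hdim : Module.finrank F K = k) :
    ∃ e : Module.Basis (Fin k) F K,
      ∀ i j, Algebra.trace F K (e i * e j) = if i = j then 1 else 0 := by
  subst hdim
  have : FiniteDimensional F K := Module.Finite.of_finite
  have : CharP K 2 := charP_of_injective_algebraMap (algebraMap F K).injective 2
  exact LinearMap.BilinForm.exists_isOrthonormal_basis
    (FiniteField.isSquare_of_char_two (ringChar.eq F 2))
    (Algebra.traceForm_isSymm (R := F) (S := K)) (traceForm_nondegenerate F K)
    (Algebra.not_isAlt_traceForm (FiniteField.isSquare_of_char_two (ringChar.eq K 2)))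

/-- For `q` of characteristic 2, there exists a self-dual basis of `F_{q^k}` over `F_q`. -/
theorem exists_self_dual_basis
    {F K : Type*} [Field F] [Fintype F] [CharP F 2] [Field K] [Fintype K] [Algebra F K]
    {k : ℕ} (hk : 1 ≤ k) (hdim : Module.finrank F K = k) :
    ∃ e : Module.Basis (Fin k) F K,
      ∀ i j, Algebra.trace F K (e i * e j) = if i = j then 1 else 0 :=
  exists_self_dual_basis_general hdim
end
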